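/- arXiv:1904.09915 — 2 statements merged into one kernel-verified Lean document; each statement's English description precedes it below -/
import Mathlib

section
/- Let n ≥ 1, let A be a real symmetric (2n+1)×(2n+1) semi-bipartite block matrix with parts V₁ (of size n+1) and V₂ (of size n), and let p ∈ V₁. Then the following are equivalent: (a) det(A₋ₚ) ≠ 0; (b) the kernel of A is one-dimensional and every nonzero vector in the kernel of A has nonzero coordinate at p. -/
/-!
If `A₋ₚ` is invertible, no nonzero kernel vector of `A` vanishes at `p`, so evaluation at `p`
embeds `ker A` into the scalars; and `ker A ≠ 0` because the `|V₂| × |V₁|` block `Bᵀ` has more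
columns than rows, so some `(x, 0)` with `Bᵀ x = 0` lies in `ker A`. Conversely, a kernel vector
`w` of a singular `A₋ₚ`, extended by `0` at `p`, satisfies `A w = c eₚ`; pairing with a kernel
vector `x` of the symmetric `A` gives `c xₚ = 0`, so if `xₚ ≠ 0` then `w` is a nonzero kernel
vector of `A` vanishing at `p`.
-/

open Matrix

namespace Matrix

variable {ι K : Type*} [Fintype ι] [Field K]

theorem ker_mulVecLin_ne_bot_of_card_lt {κ : Type*} [Fintype κ]
    (A : Matrix (ι ⊕ κ) (ι ⊕ κ) K) (hA : ∀ u v, A (.inl u) (.inl v) = 0)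
    (hcard : Fintype.card κ < Fintype.card ι) : LinearMap.ker A.mulVecLin ≠ ⊥ := by
  have hB : LinearMap.ker (A.submatrix Sum.inr Sum.inl).mulVecLin ≠ ⊥ :=
    LinearMap.ker_ne_bot_of_finrank_lt (by simpa using hcard)
  obtain ⟨x, hx, hx0⟩ := (Submodule.ne_bot_iff _).mp hB
  refine (Submodule.ne_bot_iff _).mpr ⟨Sum.elim x 0, ?_, fun h => hx0 ?_⟩
  · ext (u | j)
    · simp [mulVec, dotProduct, hA]
    · simpa [mulVec, dotProduct] using congrFun hx j
  · ext u
    exact congrFun h (.inl u)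

variable [DecidableEq ι]

/-- The principal submatrix `A₋ₚ`. -/
def deleteRowCol (A : Matrix ι ι K) (p : ι) : Matrix {w // w ≠ p} {w // w ≠ p} K :=
  A.submatrix Subtype.val Subtype.val

theorem deleteRowCol_mulVec_of_apply_eq_zero (A : Matrix ι ι K) {p : ι} {z : ι → K}
    (hz : z p = 0) : A.deleteRowCol p *ᵥ (z ∘ Subtype.val) = (A *ᵥ z) ∘ Subtype.val := by
  ext i
  simp only [Function.comp_apply, mulVec, dotProduct, deleteRowCol, submatrix_apply]
  rw [Fintype.sum_eq_add_sum_subtype_ne _ p, hz, mul_zero, zero_add]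

theorem eq_zero_of_mulVec_eq_zero_of_det_deleteRowCol_ne_zero {A : Matrix ι ι K} {p : ι}
    (hdet : (A.deleteRowCol p).det ≠ 0) {z : ι → K} (hz : A *ᵥ z = 0) (hzp : z p = 0) :
    z = 0 := by
  have hrestrict : z ∘ Subtype.val = (0 : {w // w ≠ p} → K) := by
    by_contra hne
    exact hdet (exists_mulVec_eq_zero_iff.mp
      ⟨_, hne, by rw [deleteRowCol_mulVec_of_apply_eq_zero A hzp, hz]; rfl⟩)
  ext v
  by_cases hv : v = p
  · rw [hv, hzp]; rfl
  · exact congrFun hrestrict ⟨v, hv⟩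

theorem exists_mulVec_eq_zero_apply_eq_zero_of_det_deleteRowCol_eq_zero {A : Matrix ι ι K}
    (hA : A.IsSymm) {p : ι} {x : ι → K} (hx : A *ᵥ x = 0) (hxp : x p ≠ 0)
    (hdet : (A.deleteRowCol p).det = 0) : ∃ z ≠ 0, A *ᵥ z = 0 ∧ z p = 0 := by
  obtain ⟨w, hw, hAw⟩ := exists_mulVec_eq_zero_iff.mpr hdet
  set z : ι → K := fun v => if h : v = p then 0 else w ⟨v, h⟩
  have hzp : z p = 0 := dif_pos rfl
  have hzw : z ∘ Subtype.val = w := funext fun i => dif_neg i.2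
  have hoff : ∀ v ≠ p, (A *ᵥ z) v = 0 := fun v hv => by
    simpa [hzw, hAw] using (congrFun (deleteRowCol_mulVec_of_apply_eq_zero A hzp) ⟨v, hv⟩).symm
  have hpair : x ⬝ᵥ (A *ᵥ z) = x p * (A *ᵥ z) p :=
    Finset.sum_eq_single p (fun v _ hv => by rw [hoff v hv, mul_zero]) (by simp)
  have hAzp : (A *ᵥ z) p = 0 := by
    have horth : x ⬝ᵥ (A *ᵥ z) = 0 := by
      rw [dotProduct_mulVec, ← mulVec_transpose, hA.eq, hx, zero_dotProduct]
    exact (mul_eq_zero.mp (hpair ▸ horth)).resolve_left hxp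
  refine ⟨z, fun h => hw ?_, ?_, hzp⟩
  · rw [← hzw, h]; rfl
  · ext v
    by_cases hv : v = p
    · rw [hv, hAzp]; rfl
    · exact hoff v hv

end Matrix

theorem Submodule.finrank_le_one_of_apply_eq_zero_imp_eq_zero {ι K : Type*} [Field K]
    {W : Submodule K (ι → K)} (p : ι) (hW : ∀ z ∈ W, z p = 0 → z = 0) :
    Module.finrank K W ≤ 1 := by
  have hinj : Function.Injective (LinearMap.proj p ∘ₗ W.subtype) := by
    rw [← LinearMap.ker_eq_bot, LinearMap.ker_eq_bot']
    exact fun z hz => Subtype.ext (hW z z.2 hz)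
  simpa using LinearMap.finrank_le_finrank_of_injective hinj

theorem semiBipartite_det_ne_zero_iff_unique_kernel_general (n : ℕ)
    (A : Matrix (Fin (n + 1) ⊕ Fin n) (Fin (n + 1) ⊕ Fin n) ℝ)
    (hsymm : A.IsSymm)
    (hbip : ∀ u v : Fin (n + 1), A (Sum.inl u) (Sum.inl v) = 0)
    (p : Fin (n + 1)) :
    (A.submatrix
        (fun i : {w : Fin (n + 1) ⊕ Fin n // w ≠ Sum.inl p} => (i : Fin (n + 1) ⊕ Fin n))
        (fun j : {w : Fin (n + 1) ⊕ Fin n // w ≠ Sum.inl p} => (j : Fin (n + 1) ⊕ Fin n))).det ≠ 0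
    ↔ (Module.finrank ℝ (LinearMap.ker A.mulVecLin) = 1 ∧
        ∀ z ∈ LinearMap.ker A.mulVecLin, z ≠ 0 → z (Sum.inl p) ≠ 0) := by
  change (A.deleteRowCol (.inl p)).det ≠ 0 ↔ _
  constructor
  · intro hdet
    have hker : ∀ z ∈ LinearMap.ker A.mulVecLin, z (.inl p) = 0 → z = 0 := fun z hz =>
      eq_zero_of_mulVec_eq_zero_of_det_deleteRowCol_ne_zero hdet hz
    have hker_ne_bot := ker_mulVecLin_ne_bot_of_card_lt A hbip (by simp)
    exact ⟨le_antisymm (Submodule.finrank_le_one_of_apply_eq_zero_imp_eq_zero _ hker)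
      (Submodule.one_le_finrank_iff.mpr hker_ne_bot), fun z hz hz0 hzp => hz0 (hker z hz hzp)⟩
  · rintro ⟨hrank, hp⟩ hdet
    obtain ⟨x, hx, hx0⟩ := Submodule.exists_mem_ne_zero_of_ne_bot
      (Submodule.one_le_finrank_iff.mp hrank.ge)
    obtain ⟨z, hz0, hz, hzp⟩ :=
      exists_mulVec_eq_zero_apply_eq_zero_of_det_deleteRowCol_eq_zero hsymm hx (hp x hx hx0) hdet
    exact hp z hz hz0 hzp

/-- Equivalence of the two conditions of the main theorem: for a semi-bipartite
matrix `A` with `|V₁| = |V₂| + 1` and `p ∈ V₁`, `det (A - p) ≠ 0` iff `A` has a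
one-dimensional kernel all of whose nonzero vectors have nonzero amplitude at `p`. -/
theorem semiBipartite_det_ne_zero_iff_unique_kernel (n : ℕ) (hn : 1 ≤ n)
    (A : Matrix (Fin (n + 1) ⊕ Fin n) (Fin (n + 1) ⊕ Fin n) ℝ)
    (hsymm : A.IsSymm)
    (hbip : ∀ u v : Fin (n + 1), A (Sum.inl u) (Sum.inl v) = 0)
    (p : Fin (n + 1)) :
    (A.submatrix
        (fun i : {w : Fin (n + 1) ⊕ Fin n // w ≠ Sum.inl p} => (i : Fin (n + 1) ⊕ Fin n))
        (fun j : {w : Fin (n + 1) ⊕ Fin n // w ≠ Sum.inl p} => (j : Fin (n + 1) ⊕ Fin n))).det ≠ 0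
    ↔ (Module.finrank ℝ (LinearMap.ker A.mulVecLin) = 1 ∧
        ∀ z ∈ LinearMap.ker A.mulVecLin, z ≠ 0 → z (Sum.inl p) ≠ 0) :=
  semiBipartite_det_ne_zero_iff_unique_kernel_general n A hsymm hbip p
end

section
/- Let A be a real symmetric N×N matrix (N ≥ 3) and let u ≠ v be two of its indices such that A_{v w} = 0 for every index w ≠ u and A_{v u} ≠ 0. Then every vector z in the kernel of A satisfies z_u = 0 and z_v = −(1/A_{v u}) · Σ_{w ∉ {u,v}} A_{u w} z_w, and the restriction map sending z ∈ ker A to its restriction to the indices other than u and v is a linear isomorphism from ker A onto ker A₋₍ᵤ,ᵥ₎. -/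
/-!
Row `v` of `A z = 0` reads `A v u * z u = 0`, so `z u = 0`, and row `u` then determines `z v`
from the entries of `z` off `{u, v}`. By symmetry column `v` vanishes off `u`, so the remaining
rows say exactly that the restriction of `z` lies in the kernel of `A₋{u,v}`. Conversely, every
vector of that kernel extends to a kernel vector of `A` by these two formulas.
-/

open Matrix

theorem Fintype.sum_eq_add_add_sum_subtype_ne_and_ne {ι M : Type*} [Fintype ι] [DecidableEq ι]
    [AddCommMonoid M] {u v : ι} (huv : u ≠ v) (f : ι → M) :
    ∑ w, f w = f u + f v + ∑ w : {w : ι // w ≠ u ∧ w ≠ v}, f w := by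
  rw [← Finset.sum_add_sum_compl {u, v} f, Finset.sum_pair huv,
    Finset.sum_subtype _ (p := fun w => w ≠ u ∧ w ≠ v) (fun w => by simp)]

namespace Matrix

variable {ι : Type*} {u v : ι}

section Semiring

variable {R : Type*} [NonUnitalNonAssocSemiring R] {A : Matrix ι ι R}

theorem submatrix_mulVec_apply {m n : Type*} [Fintype n] (f : m → ι) (g : n → ι) (y : n → R)
    (i : m) : (A.submatrix f g *ᵥ y) i = ∑ j, A (f i) (g j) * y j :=
  rfl

variable [Fintype ι]

theorem mulVec_apply_of_forall_ne_eq_zero (hdang : ∀ w, w ≠ u → A v w = 0) (z : ι → R) :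
    (A *ᵥ z) v = A v u * z u :=
  Finset.sum_eq_single u (fun w _ hw => by simp [hdang w hw]) (by simp)

variable [DecidableEq ι]

theorem mulVec_apply_eq_add_add_sum_subtype (huv : u ≠ v) (z : ι → R) (i : ι) :
    (A *ᵥ z) i = A i u * z u + A i v * z v +
      ∑ w : {w : ι // w ≠ u ∧ w ≠ v}, A i w * z w :=
  Fintype.sum_eq_add_add_sum_subtype_ne_and_ne huv _

end Semiring

variable [Fintype ι] {K : Type*} [Field K] {A : Matrix ι ι K}

theorem apply_eq_zero_of_mulVec_eq_zero_of_dangling (hdang : ∀ w, w ≠ u → A v w = 0)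
    (hvu : A v u ≠ 0) {z : ι → K} (hz : A *ᵥ z = 0) : z u = 0 := by
  have hrow := congrFun hz v
  rw [mulVec_apply_of_forall_ne_eq_zero hdang, Pi.zero_apply] at hrow
  exact (mul_eq_zero.mp hrow).resolve_left hvu

variable [DecidableEq ι]

theorem apply_eq_of_mulVec_eq_zero_of_dangling (hsymm : A.IsSymm) (huv : u ≠ v)
    (hdang : ∀ w, w ≠ u → A v w = 0) (hvu : A v u ≠ 0) {z : ι → K} (hz : A *ᵥ z = 0) :
    z v = -(1 / A v u) * ∑ w : {w : ι // w ≠ u ∧ w ≠ v}, A u w * z w := by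
  have hrow := congrFun hz u
  rw [mulVec_apply_eq_add_add_sum_subtype huv,
    apply_eq_zero_of_mulVec_eq_zero_of_dangling hdang hvu hz, hsymm.apply v u,
    Pi.zero_apply] at hrow
  field_simp
  linear_combination hrow

theorem submatrix_mulVec_restrict_eq_zero_of_dangling (hsymm : A.IsSymm) (huv : u ≠ v)
    (hdang : ∀ w, w ≠ u → A v w = 0) (hvu : A v u ≠ 0) {z : ι → K} (hz : A *ᵥ z = 0) :
    A.submatrix (Subtype.val : {w : ι // w ≠ u ∧ w ≠ v} → ι) Subtype.val *ᵥ
      (fun w : {w : ι // w ≠ u ∧ w ≠ v} => z w) = 0 := by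
  funext i
  have hrow := congrFun hz i
  rw [mulVec_apply_eq_add_add_sum_subtype huv,
    apply_eq_zero_of_mulVec_eq_zero_of_dangling hdang hvu hz, ← hsymm.apply i v,
    hdang i i.2.1, Pi.zero_apply] at hrow
  rw [submatrix_mulVec_apply, Pi.zero_apply]
  simpa using hrow

/-- The inverse of restricting kernel vectors of `A` to the indices off `{u, v}`. -/
def danglingExtension (A : Matrix ι ι K) (u v : ι) (y : {w : ι // w ≠ u ∧ w ≠ v} → K) :
    ι → K :=
  fun w => if h : w ≠ u ∧ w ≠ v then y ⟨w, h⟩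
    else if w = v then -(1 / A v u) * ∑ i : {w : ι // w ≠ u ∧ w ≠ v}, A u i * y i else 0

@[simp]
theorem danglingExtension_apply_coe (y : {w : ι // w ≠ u ∧ w ≠ v} → K)
    (w : {w : ι // w ≠ u ∧ w ≠ v}) : danglingExtension A u v y w = y w := by
  simp [danglingExtension, w.2]

theorem danglingExtension_apply_left (huv : u ≠ v) (y : {w : ι // w ≠ u ∧ w ≠ v} → K) :
    danglingExtension A u v y u = 0 := by
  simp [danglingExtension, huv]

theorem danglingExtension_apply_right (huv : u ≠ v) (y : {w : ι // w ≠ u ∧ w ≠ v} → K) :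
    danglingExtension A u v y v =
      -(1 / A v u) * ∑ i : {w : ι // w ≠ u ∧ w ≠ v}, A u i * y i := by
  simp [danglingExtension, huv.symm]

theorem danglingExtension_restrict_of_mulVec_eq_zero (hsymm : A.IsSymm) (huv : u ≠ v)
    (hdang : ∀ w, w ≠ u → A v w = 0) (hvu : A v u ≠ 0) {z : ι → K} (hz : A *ᵥ z = 0) :
    danglingExtension A u v (fun w => z w) = z := by
  funext w
  obtain rfl | rfl | hw : w = u ∨ w = v ∨ (w ≠ u ∧ w ≠ v) := by tauto
  · rw [danglingExtension_apply_left huv,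
      apply_eq_zero_of_mulVec_eq_zero_of_dangling hdang hvu hz]
  · rw [danglingExtension_apply_right huv,
      apply_eq_of_mulVec_eq_zero_of_dangling hsymm huv hdang hvu hz]
  · exact danglingExtension_apply_coe _ ⟨w, hw⟩

theorem mulVec_danglingExtension_eq_zero (hsymm : A.IsSymm) (huv : u ≠ v)
    (hdang : ∀ w, w ≠ u → A v w = 0) (hvu : A v u ≠ 0)
    {y : {w : ι // w ≠ u ∧ w ≠ v} → K}
    (hy : A.submatrix (Subtype.val : {w : ι // w ≠ u ∧ w ≠ v} → ι) Subtype.val *ᵥ y = 0) :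
    A *ᵥ danglingExtension A u v y = 0 := by
  funext i
  rw [mulVec_apply_eq_add_add_sum_subtype huv, danglingExtension_apply_left huv,
    danglingExtension_apply_right huv, Pi.zero_apply]
  simp only [danglingExtension_apply_coe, mul_zero, zero_add]
  obtain rfl | rfl | hi : i = u ∨ i = v ∨ (i ≠ u ∧ i ≠ v) := by tauto
  · rw [← hsymm.apply i v]
    field_simp
    ring
  · rw [hdang i huv.symm, zero_mul, zero_add]
    exact Finset.sum_eq_zero fun w _ => by rw [hdang w w.2.1, zero_mul]
  · have hrow := congrFun hy ⟨i, hi⟩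
    rw [submatrix_mulVec_apply, Pi.zero_apply] at hrow
    rw [← hsymm.apply i v, hdang i hi.1, hrow]
    ring

def kerRestrictDangling (hsymm : A.IsSymm) (huv : u ≠ v) (hdang : ∀ w, w ≠ u → A v w = 0)
    (hvu : A v u ≠ 0) :
    LinearMap.ker A.mulVecLin →ₗ[K] LinearMap.ker (A.submatrix
      (Subtype.val : {w : ι // w ≠ u ∧ w ≠ v} → ι)
      (Subtype.val : {w : ι // w ≠ u ∧ w ≠ v} → ι)).mulVecLin :=
  LinearMap.codRestrict _
    (LinearMap.funLeft K K (Subtype.val : {w : ι // w ≠ u ∧ w ≠ v} → ι) ∘ₗ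
      (LinearMap.ker _).subtype)
    fun z => submatrix_mulVec_restrict_eq_zero_of_dangling hsymm huv hdang hvu z.2

theorem bijective_kerRestrictDangling (hsymm : A.IsSymm) (huv : u ≠ v)
    (hdang : ∀ w, w ≠ u → A v w = 0) (hvu : A v u ≠ 0) :
    Function.Bijective (kerRestrictDangling hsymm huv hdang hvu) := by
  refine ⟨fun z z' h => Subtype.ext ?_, fun y =>
    ⟨⟨_, mulVec_danglingExtension_eq_zero hsymm huv hdang hvu y.2⟩,
      Subtype.ext <| funext fun w => danglingExtension_apply_coe _ w⟩⟩
  rw [← danglingExtension_restrict_of_mulVec_eq_zero hsymm huv hdang hvu z.2,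
    ← danglingExtension_restrict_of_mulVec_eq_zero hsymm huv hdang hvu z'.2]
  exact congrArg (danglingExtension A u v ∘ Subtype.val) h

end Matrix

theorem ker_restriction_equiv_of_dangling_vertex_general (N : ℕ)
    (A : Matrix (Fin N) (Fin N) ℝ) (hsymm : A.IsSymm)
    (u v : Fin N) (huv : u ≠ v)
    (hdang : ∀ w : Fin N, w ≠ u → A v w = 0) (hvu : A v u ≠ 0) :
    (∀ z : Fin N → ℝ, A.mulVec z = 0 →
      z u = 0 ∧
      z v = -(1 / A v u) * ∑ w : {w : Fin N // w ≠ u ∧ w ≠ v}, A u (w : Fin N) * z (w : Fin N)) ∧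
    ∃ e : LinearMap.ker A.mulVecLin ≃ₗ[ℝ]
        LinearMap.ker (A.submatrix
          (fun i : {w : Fin N // w ≠ u ∧ w ≠ v} => (i : Fin N))
          (fun j : {w : Fin N // w ≠ u ∧ w ≠ v} => (j : Fin N))).mulVecLin,
      ∀ (z : LinearMap.ker A.mulVecLin) (i : {w : Fin N // w ≠ u ∧ w ≠ v}),
        (e z : {w : Fin N // w ≠ u ∧ w ≠ v} → ℝ) i = (z : Fin N → ℝ) (i : Fin N) := by
  exact ⟨fun z hz => ⟨apply_eq_zero_of_mulVec_eq_zero_of_dangling hdang hvu hz,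
      apply_eq_of_mulVec_eq_zero_of_dangling hsymm huv hdang hvu hz⟩,
    LinearEquiv.ofBijective _ (bijective_kerRestrictDangling hsymm huv hdang hvu),
    fun _ _ => rfl⟩

/-- For a real symmetric matrix with a dangling vertex `v` whose unique neighbour
is `u`: every kernel vector `z` satisfies `z u = 0` and
`z v = -(1 / A v u) * ∑_{w ∉ {u,v}} A u w * z w`, and restriction of kernel vectors
to the indices other than `u, v` is a linear isomorphism onto the kernel of the
principal submatrix deleting `u` and `v`. -/
theorem ker_restriction_equiv_of_dangling_vertex (N : ℕ) (hN : 3 ≤ N)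
    (A : Matrix (Fin N) (Fin N) ℝ) (hsymm : A.IsSymm)
    (u v : Fin N) (huv : u ≠ v)
    (hdang : ∀ w : Fin N, w ≠ u → A v w = 0) (hvu : A v u ≠ 0) :
    (∀ z : Fin N → ℝ, A.mulVec z = 0 →
      z u = 0 ∧
      z v = -(1 / A v u) * ∑ w : {w : Fin N // w ≠ u ∧ w ≠ v}, A u (w : Fin N) * z (w : Fin N)) ∧
    ∃ e : LinearMap.ker A.mulVecLin ≃ₗ[ℝ]
        LinearMap.ker (A.submatrix
          (fun i : {w : Fin N // w ≠ u ∧ w ≠ v} => (i : Fin N))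
          (fun j : {w : Fin N // w ≠ u ∧ w ≠ v} => (j : Fin N))).mulVecLin,
      ∀ (z : LinearMap.ker A.mulVecLin) (i : {w : Fin N // w ≠ u ∧ w ≠ v}),
        (e z : {w : Fin N // w ≠ u ∧ w ≠ v} → ℝ) i = (z : Fin N → ℝ) (i : Fin N) :=
  ker_restriction_equiv_of_dangling_vertex_general N A hsymm u v huv hdang hvu
end
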